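/- (Singular value thresholding.) Let M = U Σ Vᵀ be a real n × c matrix, where U is n × c with orthonormal columns (UᵀU = I), V is c × c orthogonal (VᵀV = VVᵀ = I), and Σ = Diag(σ₁, …, σ_c) is diagonal with non-negative entries. For τ > 0 define Z* = U Diag((σ₁ − τ)_+, …, (σ_c − τ)_+) Vᵀ, where (a)_+ = max(a, 0). Then Z* is a global minimizer of the function Z ↦ τ‖Z‖_* + (1/2)‖Z − M‖_F²: for every real n × c matrix Z, τ‖Z*‖_* + (1/2)‖Z* − M‖_F² ≤ τ‖Z‖_* + (1/2)‖Z − M‖_F². -/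

import Mathlib

open Matrix

/-- The trace norm (nuclear norm) of a real matrix `A`: the trace of the
positive semidefinite square root of `Aᵀ * A`. -/
noncomputable def traceNorm {m n : Type*} [Fintype m] [Fintype n] [DecidableEq n]
    (A : Matrix m n ℝ) : ℝ :=
  ((Matrix.posSemidef_conjTranspose_mul_self A).1.eigenvectorUnitary.1 *
    diagonal (fun i => Real.sqrt ((Matrix.posSemidef_conjTranspose_mul_self A).1.eigenvalues i)) *
    (star (Matrix.posSemidef_conjTranspose_mul_self A).1.eigenvectorUnitary : Matrix n n ℝ)).trace

section Aux

variable {n c : Type*} [Fintype n] [Fintype c] [DecidableEq c]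

private lemma psd_eq_of_mul_self_eq {k : Type*} [Fintype k] [DecidableEq k]
    (S B : Matrix k k ℝ) (hS : S.PosSemidef) (hB : B.PosSemidef) (h : S * S = B * B) : S = B := by
  open scoped MatrixOrder in
  exact (CFC.mul_self_eq_mul_self_iff S B hS.nonneg hB.nonneg).mp h

private lemma traceNorm_mat_spec {m k : Type*} [Fintype m] [Fintype k] [DecidableEq k]
    (A : Matrix m k ℝ) :
    ((Matrix.posSemidef_conjTranspose_mul_self A).1.eigenvectorUnitary.1 *
      diagonal (fun i => Real.sqrt ((Matrix.posSemidef_conjTranspose_mul_self A).1.eigenvalues i)) *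
      (star (Matrix.posSemidef_conjTranspose_mul_self A).1.eigenvectorUnitary : Matrix k k ℝ)).PosSemidef ∧
    ((Matrix.posSemidef_conjTranspose_mul_self A).1.eigenvectorUnitary.1 *
      diagonal (fun i => Real.sqrt ((Matrix.posSemidef_conjTranspose_mul_self A).1.eigenvalues i)) *
      (star (Matrix.posSemidef_conjTranspose_mul_self A).1.eigenvectorUnitary : Matrix k k ℝ)) *
    ((Matrix.posSemidef_conjTranspose_mul_self A).1.eigenvectorUnitary.1 *
      diagonal (fun i => Real.sqrt ((Matrix.posSemidef_conjTranspose_mul_self A).1.eigenvalues i)) *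
      (star (Matrix.posSemidef_conjTranspose_mul_self A).1.eigenvectorUnitary : Matrix k k ℝ))
      = Aᴴ * A := by
  set hP := Matrix.posSemidef_conjTranspose_mul_self A
  constructor
  · have := (Matrix.posSemidef_diagonal_iff.mpr
      (fun i => Real.sqrt_nonneg (hP.1.eigenvalues i))).mul_mul_conjTranspose_same
      (hP.1.eigenvectorUnitary : Matrix k k ℝ)
    simpa [Matrix.star_eq_conjTranspose] using this
  · conv_rhs => rw [hP.1.spectral_theorem]
    rw [Unitary.conjStarAlgAut_apply]
    have hu := Unitary.coe_star_mul_self hP.1.eigenvectorUnitary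
    have hd : diagonal (fun i => Real.sqrt (hP.1.eigenvalues i)) *
        diagonal (fun i => Real.sqrt (hP.1.eigenvalues i)) =
        diagonal (RCLike.ofReal ∘ hP.1.eigenvalues) := by
      rw [Matrix.diagonal_mul_diagonal]
      congr 1
      funext i
      simp
      exact Real.mul_self_sqrt (hP.eigenvalues_nonneg i)
    rw [← hd]
    simp only [Matrix.mul_assoc]
    rw [← Matrix.mul_assoc (star (hP.1.eigenvectorUnitary : Matrix k k ℝ)), hu,
      Matrix.one_mul]

private lemma ct_eq {α β : Type*} [Fintype α] [Fintype β] (A : Matrix α β ℝ) : Aᴴ = Aᵀ :=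
  Matrix.conjTranspose_eq_transpose_of_trivial A

/-- Trace norm of `U * diagonal d * Vᵀ` with orthonormal `U`, orthogonal `V`, `d ≥ 0`. -/
private lemma traceNorm_UDVt (U : Matrix n c ℝ) (V : Matrix c c ℝ) (d : c → ℝ)
    (hU : Uᵀ * U = 1) (hV₁ : Vᵀ * V = 1) (hd : ∀ i, 0 ≤ d i) :
    traceNorm (U * Matrix.diagonal d * Vᵀ) = ∑ i, d i := by
  have hUU : ∀ X : Matrix c c ℝ, Uᵀ * (U * X) = X := fun X => by
    rw [← Matrix.mul_assoc, hU, Matrix.one_mul]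
  have hVV : ∀ X : Matrix c c ℝ, Vᵀ * (V * X) = X := fun X => by
    rw [← Matrix.mul_assoc, hV₁, Matrix.one_mul]
  set A := U * Matrix.diagonal d * Vᵀ with hA
  have hB : (V * Matrix.diagonal d * Vᵀ).PosSemidef := by
    have := (Matrix.posSemidef_diagonal_iff.mpr hd).mul_mul_conjTranspose_same V
    rwa [ct_eq] at this
  have hsq : (V * Matrix.diagonal d * Vᵀ) ^ 2 = Aᴴ * A := by
    rw [ct_eq, hA]
    simp only [pow_two, Matrix.transpose_mul, Matrix.transpose_transpose,
      Matrix.diagonal_transpose, Matrix.mul_assoc, hUU, hVV]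
  have hs := psd_eq_of_mul_self_eq _ _ (traceNorm_mat_spec A).1 hB
    (by rw [(traceNorm_mat_spec A).2, ← hsq, pow_two])
  unfold traceNorm
  rw [hs, Matrix.trace_mul_cycle, hV₁, Matrix.one_mul, Matrix.trace_diagonal]

/-- Trace norm as the sum of square roots of eigenvalues of `Zᴴ * Z`. -/
private lemma traceNorm_eq_sum (Z : Matrix n c ℝ) :
    traceNorm Z =
      ∑ j, Real.sqrt ((Matrix.posSemidef_conjTranspose_mul_self Z).1.eigenvalues j) := by
  unfold traceNorm
  rw [Matrix.trace_mul_cycle,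
    Unitary.coe_star_mul_self, Matrix.one_mul, Matrix.trace_diagonal]

/-- Duality bound: `tr(AᵀZ) ≤ τ‖Z‖_*` for `A = U diag(e) Vᵀ` with `0 ≤ e ≤ τ`. -/
private lemma trace_le_traceNorm (U : Matrix n c ℝ) (V : Matrix c c ℝ) (e : c → ℝ) (τ : ℝ)
    (hU : Uᵀ * U = 1) (hV₂ : V * Vᵀ = 1) (he₀ : ∀ i, 0 ≤ e i) (he₁ : ∀ i, e i ≤ τ)
    (Z : Matrix n c ℝ) :
    Matrix.trace ((U * Matrix.diagonal e * Vᵀ)ᵀ * Z) ≤ τ * traceNorm Z := by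
  have hUU : ∀ X : Matrix c c ℝ, Uᵀ * (U * X) = X := fun X => by
    rw [← Matrix.mul_assoc, hU, Matrix.one_mul]
  have hVVt : ∀ X : Matrix c c ℝ, V * (Vᵀ * X) = X := fun X => by
    rw [← Matrix.mul_assoc, hV₂, Matrix.one_mul]
  set A := U * Matrix.diagonal e * Vᵀ with hA
  have hP := Matrix.posSemidef_conjTranspose_mul_self Z
  set h := hP.1 with hh
  set W : Matrix c c ℝ := (h.eigenvectorUnitary : Matrix c c ℝ) with hWdef
  have hW1 : Wᵀ * W = 1 := by
    have := Unitary.coe_star_mul_self h.eigenvectorUnitary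
    rwa [Matrix.star_eq_conjTranspose, ct_eq] at this
  have hW2 : W * Wᵀ = 1 := by
    have := Unitary.coe_mul_star_self h.eigenvectorUnitary
    rwa [Unitary.coe_star, Matrix.star_eq_conjTranspose,
      ct_eq (h.eigenvectorUnitary : Matrix c c ℝ)] at this
  have hdiag : Wᵀ * (Zᴴ * Z) * W = Matrix.diagonal h.eigenvalues := by
    have := h.conjStarAlgAut_star_eigenvectorUnitary
    rw [Unitary.conjStarAlgAut_star_apply] at this
    rwa [Matrix.star_eq_conjTranspose, ct_eq (h.eigenvectorUnitary : Matrix c c ℝ),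
      show RCLike.ofReal ∘ h.eigenvalues = h.eigenvalues from funext fun i => by simp] at this
  -- trace identity
  have e1 : Matrix.trace ((A * W)ᵀ * (Z * W)) = Matrix.trace (Aᵀ * Z) := by
    rw [Matrix.transpose_mul, Matrix.trace_mul_comm, Matrix.mul_assoc Z W,
      ← Matrix.mul_assoc W Wᵀ, hW2, Matrix.one_mul, Matrix.trace_mul_comm]
  have e2 : Matrix.trace ((A * W)ᵀ * (Z * W)) = ∑ j, ∑ k, (A * W) k j * (Z * W) k j := by
    simp [Matrix.trace, Matrix.diag, Matrix.mul_apply, mul_comm]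
  -- column norms of Z*W
  have hZWm : (Z * W)ᵀ * (Z * W) = Matrix.diagonal h.eigenvalues := by
    rw [← hdiag]
    simp only [ct_eq, Matrix.transpose_mul, Matrix.mul_assoc]
  have hZW : ∀ j, ∑ k, (Z * W) k j ^ 2 = h.eigenvalues j := by
    intro j
    have h0 : ((Z * W)ᵀ * (Z * W)) j j = h.eigenvalues j := by
      rw [hZWm]; simp
    rw [← h0]
    simp [Matrix.mul_apply, sq, mul_comm]
  -- column norms of A*W
  set Q : Matrix c c ℝ := Vᵀ * W with hQdef
  have hQQ : Qᵀ * Q = 1 := by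
    rw [hQdef, Matrix.transpose_mul, Matrix.transpose_transpose, Matrix.mul_assoc,
      hVVt, hW1]
  have hAWm : (A * W)ᵀ * (A * W) = Qᵀ * (Matrix.diagonal (fun i => e i * e i) * Q) := by
    rw [← Matrix.diagonal_mul_diagonal]
    rw [hA, hQdef]
    simp only [Matrix.transpose_mul, Matrix.transpose_transpose, Matrix.diagonal_transpose,
      Matrix.mul_assoc, hUU]
  have hτ0 : ∀ j : c, (0:ℝ) ≤ τ := fun j => le_trans (he₀ j) (he₁ j)
  have hAW : ∀ j, ∑ k, (A * W) k j ^ 2 ≤ τ ^ 2 := by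
    intro j
    have h0 : ∑ k, (A * W) k j ^ 2 = ((A * W)ᵀ * (A * W)) j j := by
      simp [Matrix.mul_apply, sq, mul_comm]
    rw [h0, hAWm]
    have h1 : (Qᵀ * (Matrix.diagonal (fun i => e i * e i) * Q)) j j
        = ∑ i, (e i * e i) * (Q i j * Q i j) := by
      simp only [Matrix.mul_apply, Matrix.transpose_apply, Matrix.diagonal_apply, ite_mul,
        zero_mul, Finset.sum_ite_eq, Finset.mem_univ, if_true]
      exact Finset.sum_congr rfl fun i _ => by ring
    have h2 : ∑ i, Q i j * Q i j = 1 := by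
      have : (Qᵀ * Q) j j = (1 : Matrix c c ℝ) j j := by rw [hQQ]
      simpa [Matrix.mul_apply] using this
    have h3 : ∑ i, (e i * e i) * (Q i j * Q i j) ≤ ∑ i, (τ * τ) * (Q i j * Q i j) := by
      apply Finset.sum_le_sum
      intro i _
      have : e i * e i ≤ τ * τ := mul_le_mul (he₁ i) (he₁ i) (he₀ i) (hτ0 j)
      nlinarith [mul_self_nonneg (Q i j)]
    calc (Qᵀ * (Matrix.diagonal (fun i => e i * e i) * Q)) j j
        = ∑ i, (e i * e i) * (Q i j * Q i j) := h1
      _ ≤ ∑ i, (τ * τ) * (Q i j * Q i j) := h3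
      _ = (τ * τ) * ∑ i, Q i j * Q i j := by rw [← Finset.mul_sum]
      _ = τ ^ 2 := by rw [h2, mul_one]; ring
  calc Matrix.trace (Aᵀ * Z) = ∑ j, ∑ k, (A * W) k j * (Z * W) k j := by rw [← e1, e2]
    _ ≤ ∑ j, Real.sqrt (∑ k, (A * W) k j ^ 2) * Real.sqrt (∑ k, (Z * W) k j ^ 2) :=
        Finset.sum_le_sum fun j _ => Real.sum_mul_le_sqrt_mul_sqrt _ _ _
    _ ≤ ∑ j, τ * Real.sqrt (h.eigenvalues j) := by
        apply Finset.sum_le_sum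
        intro j _
        rw [hZW j]
        apply mul_le_mul_of_nonneg_right _ (Real.sqrt_nonneg _)
        calc Real.sqrt (∑ k, (A * W) k j ^ 2) ≤ Real.sqrt (τ ^ 2) :=
              Real.sqrt_le_sqrt (hAW j)
          _ = τ := Real.sqrt_sq (hτ0 j)
    _ = τ * traceNorm Z := by rw [traceNorm_eq_sum, Finset.mul_sum]

end Aux

/-- Singular value thresholding: given an SVD `M = U * Diag(σ) * Vᵀ` (with `U`
having orthonormal columns, `V` orthogonal, and `σ` non-negative) and `τ > 0`,
the matrix `Z* = U * Diag((σ - τ)₊) * Vᵀ` globally minimizes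
`Z ↦ τ‖Z‖_* + (1/2)‖Z - M‖_F²`. -/
theorem singular_value_thresholding {n c : Type*} [Fintype n] [Fintype c]
    [DecidableEq c] (M : Matrix n c ℝ) (U : Matrix n c ℝ) (V : Matrix c c ℝ)
    (σ : c → ℝ) (τ : ℝ)
    (hM : M = U * Matrix.diagonal σ * Vᵀ)
    (hU : Uᵀ * U = 1)
    (hV₁ : Vᵀ * V = 1) (hV₂ : V * Vᵀ = 1)
    (hσ : ∀ i, 0 ≤ σ i) (hτ : 0 < τ) :
    ∀ Z : Matrix n c ℝ,
      τ * traceNorm (U * Matrix.diagonal (fun i => max (σ i - τ) 0) * Vᵀ) +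
        (1 / 2) * Matrix.trace
          ((U * Matrix.diagonal (fun i => max (σ i - τ) 0) * Vᵀ - M)ᵀ *
            (U * Matrix.diagonal (fun i => max (σ i - τ) 0) * Vᵀ - M)) ≤
      τ * traceNorm Z + (1 / 2) * Matrix.trace ((Z - M)ᵀ * (Z - M)) := by
  intro Z
  have hUU : ∀ X : Matrix c c ℝ, Uᵀ * (U * X) = X := fun X => by
    rw [← Matrix.mul_assoc, hU, Matrix.one_mul]
  set Zs := U * Matrix.diagonal (fun i => max (σ i - τ) 0) * Vᵀ with hZs
  set A := U * Matrix.diagonal (fun i => min (σ i) τ) * Vᵀ with hAdef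
  have hτ' : 0 ≤ τ := hτ.le
  have hfun : (fun i => σ i - max (σ i - τ) 0) = fun i => min (σ i) τ := by
    funext i
    rcases le_total (σ i) τ with h | h
    · rw [max_eq_right (by linarith : σ i - τ ≤ 0), min_eq_left h, sub_zero]
    · rw [max_eq_left (by linarith : 0 ≤ σ i - τ), min_eq_right h]; ring
  have hMZ : M - Zs = A := by
    rw [hM, hZs, hAdef, ← Matrix.sub_mul, ← Matrix.mul_sub, Matrix.diagonal_sub, hfun]
  have hNs : traceNorm Zs = ∑ i, max (σ i - τ) 0 :=
    traceNorm_UDVt U V _ hU hV₁ (fun i => le_max_right _ _)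
  have hAZs : Matrix.trace (Aᵀ * Zs) = τ * ∑ i, max (σ i - τ) 0 := by
    have h1 : Aᵀ * Zs = V * (Matrix.diagonal
        (fun i => min (σ i) τ * max (σ i - τ) 0) * Vᵀ) := by
      rw [← Matrix.diagonal_mul_diagonal, hAdef, hZs]
      simp only [Matrix.transpose_mul, Matrix.transpose_transpose, Matrix.diagonal_transpose,
        Matrix.mul_assoc, hUU]
    rw [h1, ← Matrix.mul_assoc, Matrix.trace_mul_cycle, hV₁, Matrix.one_mul,
      Matrix.trace_diagonal]
    rw [Finset.mul_sum]
    apply Finset.sum_congr rfl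
    intro i _
    rcases le_total (σ i) τ with h | h
    · rw [max_eq_right (by linarith)]; ring
    · rw [min_eq_right h]
  have hdual := trace_le_traceNorm U V (fun i => min (σ i) τ) τ hU hV₂
    (fun i => le_min (hσ i) hτ') (fun i => min_le_right _ _) Z
  have hposB : 0 ≤ Matrix.trace ((Z - Zs)ᵀ * (Z - Zs)) := by
    have h0 : Matrix.trace ((Z - Zs)ᵀ * (Z - Zs)) = ∑ j, ∑ k, (Z - Zs) k j ^ 2 := by
      simp [Matrix.trace, Matrix.diag, Matrix.mul_apply, sq]
    rw [h0]
    positivity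
  have tt : ∀ X Y : Matrix n c ℝ, Matrix.trace (Xᵀ * Y) = Matrix.trace (Yᵀ * X) :=
    fun X Y => by
      rw [← Matrix.trace_transpose (Yᵀ * X), Matrix.transpose_mul, Matrix.transpose_transpose]
  have expand : Matrix.trace ((Z - M)ᵀ * (Z - M))
      = Matrix.trace ((Z - Zs)ᵀ * (Z - Zs)) - 2 * Matrix.trace (Aᵀ * Z)
        + 2 * Matrix.trace (Aᵀ * Zs) + Matrix.trace (Aᵀ * A) := by
    have hZM : Z - M = (Z - Zs) - A := by rw [← hMZ]; abel
    rw [hZM]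
    simp only [Matrix.transpose_sub, Matrix.sub_mul, Matrix.mul_sub, Matrix.trace_sub]
    linarith [tt Z Zs, tt Z A, tt Zs A]
  have expand0 : Matrix.trace ((Zs - M)ᵀ * (Zs - M)) = Matrix.trace (Aᵀ * A) := by
    have h0 : Zs - M = -A := by rw [← hMZ]; abel
    rw [h0]
    simp [Matrix.transpose_neg, Matrix.neg_mul, Matrix.mul_neg]
  have key : Matrix.trace (Aᵀ * Zs) = τ * traceNorm Zs := by rw [hNs, hAZs]
  linarith [hdual, hposB, expand, expand0, key]
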